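/- arXiv:math/0406519 — 3 statements merged into one kernel-verified Lean document; each statement's English description precedes it below -/
import Mathlib

section
/- Under the random effects mixture model, for every fixed t > 0, the expected False Discovery Proportion satisfies E[Γ(t)] = Q(t)·(1 − (1 − G(t))^m), and the expected False Nondiscovery Proportion satisfies E[Ξ(t)] = Q̃(t)·(1 − G(t)^m). -/
open MeasureTheory ProbabilityTheory Filter
open scoped ENNReal NNReal Topology Classical

noncomputable section

/-- Real-valued indicator of a proposition. -/
def ind (p : Prop) : ℝ := if p then 1 else 0

/-- `F` is the CDF of a distribution on `[0,1]` that stochastically dominates `Uniform(0,1)`. -/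
def IsPvalueCDF (F : ℝ → ℝ) : Prop :=
  Monotone F ∧ (∀ t ≤ (0 : ℝ), F t = 0) ∧ (∀ t, (1 : ℝ) ≤ t → F t = 1) ∧
    ∀ t ∈ Set.Icc (0 : ℝ) 1, t ≤ F t

/-- CDF of the uniform distribution on `[0,1]`. -/
def Ucdf (t : ℝ) : ℝ := max 0 (min t 1)

/-- Marginal CDF of the p-values: `G = (1-a)U + aF`. -/
def Gmix (a : ℝ) (F : ℝ → ℝ) (t : ℝ) : ℝ := (1 - a) * Ucdf t + a * F t

/-- The FDP (false discovery proportion) process. -/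
def FDP (m : ℕ) (H P : ℕ → ℝ) (t : ℝ) : ℝ :=
  (∑ i ∈ Finset.range m, ind (P i ≤ t) * (1 - H i)) /
    ((∑ i ∈ Finset.range m, ind (P i ≤ t)) + ind (∀ i ∈ Finset.range m, t < P i))

/-- The FNP (false nondiscovery proportion) process. -/
def FNP (m : ℕ) (H P : ℕ → ℝ) (t : ℝ) : ℝ :=
  (∑ i ∈ Finset.range m, ind (t < P i) * H i) /
    ((∑ i ∈ Finset.range m, ind (t < P i)) + ind (∀ i ∈ Finset.range m, P i ≤ t))

/-- Empirical CDF of the first `m` p-values. -/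
def ecdf (m : ℕ) (P : ℕ → ℝ) (t : ℝ) : ℝ := (∑ i ∈ Finset.range m, ind (P i ≤ t)) / m

/-- The random-effects (mixture) model for multiple testing: the pairs `(H i, P i)` are
i.i.d., `H i ~ Bernoulli(a)`, `P i | H i = 0 ~ Uniform(0,1)` and `P i | H i = 1 ~ F`. -/
def RandomEffectsModel {Ω : Type*} [MeasurableSpace Ω] (Pr : Measure Ω)
    (H P : ℕ → Ω → ℝ) (a : ℝ) (F : ℝ → ℝ) : Prop :=
  (∀ i, Measurable (H i)) ∧ (∀ i, Measurable (P i)) ∧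
  (∀ i ω, H i ω = 0 ∨ H i ω = 1) ∧
  (∀ i ω, P i ω ∈ Set.Icc (0 : ℝ) 1) ∧
  iIndepFun (fun i ω => (H i ω, P i ω)) Pr ∧
  (∀ i j, IdentDistrib (fun ω => (H i ω, P i ω)) (fun ω => (H j ω, P j ω)) Pr Pr) ∧
  (∀ i, Pr {ω | H i ω = 1} = ENNReal.ofReal a) ∧
  (∀ i, ∀ t ∈ Set.Icc (0 : ℝ) 1,
    Pr {ω | H i ω = 0 ∧ P i ω ≤ t} = ENNReal.ofReal ((1 - a) * t)) ∧
  (∀ i, ∀ t ∈ Set.Icc (0 : ℝ) 1,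
    Pr {ω | H i ω = 1 ∧ P i ω ≤ t} = ENNReal.ofReal (a * F t))

/-- The i.i.d. p-value model: `P i` are i.i.d. with marginal CDF `G = (1-a)U + aF`. -/
def PvalueModel {Ω : Type*} [MeasurableSpace Ω] (Pr : Measure Ω)
    (P : ℕ → Ω → ℝ) (a : ℝ) (F : ℝ → ℝ) : Prop :=
  (∀ i, Measurable (P i)) ∧
  iIndepFun P Pr ∧
  (∀ i t, Pr {ω | P i ω ≤ t} = ENNReal.ofReal (Gmix a F t))

/-- The set `O_F` of admissible mixing proportions for `F`. -/
def OSet (F : ℝ → ℝ) : Set ℝ :=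
  {b | b ∈ Set.Icc (0 : ℝ) 1 ∧
    ∃ Hc : ℝ → ℝ, IsPvalueCDF Hc ∧ ∀ t, F t = (1 - b) * Ucdf t + b * Hc t}

/-- `ζ_F = inf {b : (b, H) ∈ O_F}`. -/
def zeta (F : ℝ → ℝ) : ℝ := sInf (OSet F)

/-- Convergence in probability to a constant. -/
def TendstoInProb {Ω : Type*} [MeasurableSpace Ω] (Pr : Measure Ω)
    (X : ℕ → Ω → ℝ) (c : ℝ) : Prop :=
  ∀ ε : ℝ, 0 < ε → Tendsto (fun m => Pr {ω | ε < |X m ω - c|}) atTop (𝓝 0)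

/-- Convergence in distribution of real random variables to a limiting law `μ`. -/
def ConvInDist {Ω : Type*} [MeasurableSpace Ω] (Pr : Measure Ω)
    (X : ℕ → Ω → ℝ) (μ : Measure ℝ) : Prop :=
  ∀ f : BoundedContinuousFunction ℝ ℝ,
    Tendsto (fun m => ∫ ω, f (X m ω) ∂Pr) atTop (𝓝 (∫ x, f x ∂μ))

/-- Supremum distance between two functions over `[0,1]`. -/
def supDist (f g : ℝ → ℝ) : ℝ := sSup ((fun t => |f t - g t|) '' Set.Icc (0 : ℝ) 1)

/-- The Dvoretzky–Kiefer–Wolfowitz radius `ε_m(α)`. -/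
def dkwEps (m : ℕ) (α : ℝ) : ℝ := Real.sqrt (Real.log (2 / α) / (2 * m))

/-! Both FDP and FNP are of the form `∑ᵢ 1_A(Yᵢ) / max(1, ∑ⱼ 1_B(Yⱼ))` for the i.i.d. pairs
`Yᵢ = (Hᵢ, Pᵢ)` and sets `A ⊆ B` (for the FDP, `A = {H = 0, P ≤ t}` and `B = {P ≤ t}`).
If `Yᵢ ∈ A` then `Yᵢ ∈ B`, so the `i`-th summand is `1_A(Yᵢ) / (1 + Nᵢ)` with `Nᵢ` the number
of the other points in `B`; as `Nᵢ` is independent of `Yᵢ`, the expectation is `P(A) · c` with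
`c = ∑ᵢ E[1 / (1 + Nᵢ)]` independent of `A`. For `A = B` the ratio is the indicator that some
point lies in `B`, so `P(B) · c = 1 - (1 - P(B))^m`, and the expectation is
`P(A) / P(B) · (1 - (1 - P(B))^m)`. -/

open Finset

section Proportion

variable {β : Type*}

def proportion (A B : Set β) (m : ℕ) (x : ℕ → β) : ℝ :=
  (∑ i ∈ range m, ind (x i ∈ A)) /
    ((∑ i ∈ range m, ind (x i ∈ B)) + ind (∀ i ∈ range m, x i ∉ B))

lemma ind_pos {p : Prop} (hp : p) : ind p = 1 := if_pos hp

lemma ind_neg {p : Prop} (hp : ¬p) : ind p = 0 := if_neg hp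

lemma ind_nonneg (p : Prop) : 0 ≤ ind p := by
  unfold ind; split_ifs <;> norm_num

lemma ind_le_one (p : Prop) : ind p ≤ 1 := by
  unfold ind; split_ifs <;> norm_num

lemma ind_mem_eq_indicator (x : β) (s : Set β) : ind (x ∈ s) = s.indicator 1 x := by
  simp [ind, Set.indicator_apply]

lemma proportion_self (B : Set β) (m : ℕ) (x : ℕ → β) :
    proportion B B m x = 1 - ind (∀ i ∈ range m, x i ∉ B) := by
  unfold proportion
  by_cases hnone : ∀ i ∈ range m, x i ∉ B
  · have hsum : ∑ i ∈ range m, ind (x i ∈ B) = 0 :=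
      sum_eq_zero fun i hi => ind_neg (hnone i hi)
    rw [hsum, ind_pos hnone]
    norm_num
  · obtain ⟨i, hi, hxi⟩ : ∃ i ∈ range m, x i ∈ B := by simpa using hnone
    have hpos : 0 < ∑ j ∈ range m, ind (x j ∈ B) :=
      lt_of_lt_of_le (by rw [ind_pos hxi]; norm_num)
        (single_le_sum (fun j _ => ind_nonneg (x j ∈ B)) hi)
    rw [ind_neg hnone, add_zero, sub_zero, div_self hpos.ne']

lemma ind_div_proportion_denom {A B : Set β} (hAB : A ⊆ B) {m i : ℕ} (hi : i ∈ range m)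
    (x : ℕ → β) :
    ind (x i ∈ A) / ((∑ j ∈ range m, ind (x j ∈ B)) + ind (∀ j ∈ range m, x j ∉ B)) =
      ind (x i ∈ A) * (1 + ∑ j ∈ (range m).erase i, ind (x j ∈ B))⁻¹ := by
  by_cases hxA : x i ∈ A
  · have hsome : ¬ ∀ j ∈ range m, x j ∉ B := fun h => h i hi (hAB hxA)
    rw [← add_sum_erase _ _ hi, ind_pos (hAB hxA), ind_neg hsome, add_zero, div_eq_mul_inv]
  · rw [ind_neg hxA, zero_div, zero_mul]

lemma proportion_eq_sum {A B : Set β} (hAB : A ⊆ B) (m : ℕ) (x : ℕ → β) :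
    proportion A B m x =
      ∑ i ∈ range m, ind (x i ∈ A) * (1 + ∑ j ∈ (range m).erase i, ind (x j ∈ B))⁻¹ := by
  rw [proportion, sum_div]
  exact sum_congr rfl fun i hi => ind_div_proportion_denom hAB hi x

lemma setOf_forall_notMem_eq_biInter {Ω : Type*} (Y : ℕ → Ω → β) (B : Set β) (m : ℕ) :
    {ω | ∀ i ∈ range m, Y i ω ∉ B} = ⋂ i ∈ range m, Y i ⁻¹' Bᶜ := by
  ext ω; simp

end Proportion

section Measurability

variable {Ω β : Type*} [MeasurableSpace Ω] [MeasurableSpace β]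

lemma measurable_ind_mem {s : Set β} (hs : MeasurableSet s) : Measurable fun x => ind (x ∈ s) := by
  simp_rw [ind_mem_eq_indicator]
  exact measurable_one.indicator hs

lemma integral_ind {μ : Measure Ω} {p : Ω → Prop} (hp : MeasurableSet {ω | p ω}) :
    ∫ ω, ind (p ω) ∂μ = μ.real {ω | p ω} := by
  simp_rw [← integral_indicator_one hp, ← ind_mem_eq_indicator]
  rfl

lemma integrable_ind {μ : Measure Ω} [IsFiniteMeasure μ] {p : Ω → Prop}
    (hp : MeasurableSet {ω | p ω}) : Integrable (fun ω => ind (p ω)) μ :=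
  (integrable_const 1).indicator hp |>.congr (ae_of_all _ fun ω => (ind_mem_eq_indicator ω _).symm)

lemma measurable_inv_one_add_sum_ind {ι : Type*} (S : Finset ι) {X : ι → Ω → β}
    (hX : ∀ j, Measurable (X j)) {B : Set β} (hB : MeasurableSet B) :
    Measurable fun ω => (1 + ∑ j ∈ S, ind (X j ω ∈ B))⁻¹ :=
  (measurable_const.add (Finset.measurable_sum _ fun j _ =>
    (measurable_ind_mem hB).comp (hX j))).inv

end Measurability

section Independent

variable {Ω β : Type*} [MeasurableSpace Ω] [MeasurableSpace β] {μ : Measure Ω}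
  {Y : ℕ → Ω → β} {A B : Set β}

lemma integral_ind_mul_inv_one_add_sum (hY : ∀ i, Measurable (Y i)) (hind : iIndepFun Y μ)
    (hA : MeasurableSet A) (hB : MeasurableSet B) {i : ℕ} {S : Finset ℕ} (hi : i ∉ S) :
    ∫ ω, ind (Y i ω ∈ A) * (1 + ∑ j ∈ S, ind (Y j ω ∈ B))⁻¹ ∂μ =
      μ.real (Y i ⁻¹' A) * ∫ ω, (1 + ∑ j ∈ S, ind (Y j ω ∈ B))⁻¹ ∂μ := by
  have hφ : Measurable fun y : ({i} : Finset ℕ) → β => ind (y ⟨i, mem_singleton_self i⟩ ∈ A) :=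
    (measurable_ind_mem hA).comp (measurable_pi_apply _)
  have hindep : IndepFun (fun ω => ind (Y i ω ∈ A))
      (fun ω => (1 + ∑ j ∈ S, ind (Y j ω ∈ B))⁻¹) μ := by
    convert (hind.indepFun_finset {i} S (disjoint_singleton_left.2 hi) hY).comp hφ
      (measurable_inv_one_add_sum_ind univ measurable_pi_apply hB) using 1
    · rfl
    · funext ω
      exact congrArg (fun s => (1 + s)⁻¹) (sum_coe_sort S fun j => ind (Y j ω ∈ B)).symm
  rw [hindep.integral_fun_mul_eq_mul_integral
    ((measurable_ind_mem hA).comp (hY i)).aestronglyMeasurable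
    (measurable_inv_one_add_sum_ind S hY hB).aestronglyMeasurable]
  congr 1
  exact integral_ind (hY i hA)

lemma integrable_ind_mul_inv_one_add_sum [IsFiniteMeasure μ] (hY : ∀ i, Measurable (Y i))
    (hA : MeasurableSet A) (hB : MeasurableSet B) (i : ℕ) (S : Finset ℕ) :
    Integrable (fun ω => ind (Y i ω ∈ A) * (1 + ∑ j ∈ S, ind (Y j ω ∈ B))⁻¹) μ := by
  refine Integrable.of_bound (((measurable_ind_mem hA).comp (hY i)).mul
    (measurable_inv_one_add_sum_ind S hY hB)).aestronglyMeasurable 1 (ae_of_all _ fun ω => ?_)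
  have hN : 1 ≤ 1 + ∑ j ∈ S, ind (Y j ω ∈ B) :=
    le_add_of_nonneg_right (sum_nonneg fun j _ => ind_nonneg _)
  rw [Real.norm_of_nonneg (mul_nonneg (ind_nonneg _) (inv_nonneg.2 (by linarith)))]
  exact mul_le_one₀ (ind_le_one _) (inv_nonneg.2 (by linarith)) (inv_le_one_of_one_le₀ hN)

lemma integral_proportion_eq_mul (hY : ∀ i, Measurable (Y i)) (hind : iIndepFun Y μ)
    (hA : MeasurableSet A) (hB : MeasurableSet B) (hAB : A ⊆ B) {p : ℝ}
    (hp : ∀ i, μ.real (Y i ⁻¹' A) = p) (m : ℕ) :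
    ∫ ω, proportion A B m (fun i => Y i ω) ∂μ =
      p * ∑ i ∈ range m, ∫ ω, (1 + ∑ j ∈ (range m).erase i, ind (Y j ω ∈ B))⁻¹ ∂μ := by
  have := hind.isProbabilityMeasure
  simp_rw [proportion_eq_sum hAB]
  rw [integral_finsetSum _ fun i _ => integrable_ind_mul_inv_one_add_sum hY hA hB i _, mul_sum]
  refine sum_congr rfl fun i _ => ?_
  rw [integral_ind_mul_inv_one_add_sum hY hind hA hB (notMem_erase i _), hp]

lemma measureReal_forall_notMem (hY : ∀ i, Measurable (Y i)) (hind : iIndepFun Y μ)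
    (hB : MeasurableSet B) {g : ℝ} (hg : ∀ i, μ.real (Y i ⁻¹' B) = g) (m : ℕ) :
    μ.real {ω | ∀ i ∈ range m, Y i ω ∉ B} = (1 - g) ^ m := by
  have := hind.isProbabilityMeasure
  rw [setOf_forall_notMem_eq_biInter, measureReal_def,
    hind.measure_inter_preimage_eq_mul (range m) fun _ _ => hB.compl, ENNReal.toReal_prod]
  simp_rw [← measureReal_def, Set.preimage_compl, probReal_compl_eq_one_sub (hY _ hB), hg,
    prod_const, card_range]

lemma integral_proportion_self (hY : ∀ i, Measurable (Y i)) (hind : iIndepFun Y μ)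
    (hB : MeasurableSet B) {g : ℝ} (hg : ∀ i, μ.real (Y i ⁻¹' B) = g) (m : ℕ) :
    ∫ ω, proportion B B m (fun i => Y i ω) ∂μ = 1 - (1 - g) ^ m := by
  have := hind.isProbabilityMeasure
  have hmeas : MeasurableSet {ω | ∀ i ∈ range m, Y i ω ∉ B} := by
    rw [setOf_forall_notMem_eq_biInter]
    exact Finset.measurableSet_biInter _ fun i _ => (hY i hB).compl
  simp_rw [proportion_self]
  rw [integral_sub (integrable_const 1) (integrable_ind hmeas), integral_const,
    integral_ind hmeas, measureReal_forall_notMem hY hind hB hg]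
  simp

theorem integral_proportion (hY : ∀ i, Measurable (Y i)) (hind : iIndepFun Y μ)
    (hA : MeasurableSet A) (hB : MeasurableSet B) (hAB : A ⊆ B) {p g : ℝ}
    (hp : ∀ i, μ.real (Y i ⁻¹' A) = p) (hg : ∀ i, μ.real (Y i ⁻¹' B) = g) (m : ℕ) :
    ∫ ω, proportion A B m (fun i => Y i ω) ∂μ = p / g * (1 - (1 - g) ^ m) := by
  rw [← integral_proportion_self hY hind hB hg, integral_proportion_eq_mul hY hind hA hB hAB hp,
    integral_proportion_eq_mul hY hind hB hB subset_rfl hg]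
  rcases eq_or_ne g 0 with hg0 | hg0
  · have := hind.isProbabilityMeasure
    have hpg : p ≤ g := hp 0 ▸ hg 0 ▸ measureReal_mono (Set.preimage_mono hAB)
    have hp0 : p = 0 := le_antisymm (hg0 ▸ hpg) (hp 0 ▸ measureReal_nonneg)
    simp [hp0]
  · field_simp

end Independent

lemma Ucdf_eq_self {t : ℝ} (ht : t ∈ Set.Icc (0 : ℝ) 1) : Ucdf t = t := by
  rw [Ucdf, min_eq_left ht.2, max_eq_right ht.1]

lemma FDP_eq_proportion {H : ℕ → ℝ} (hH : ∀ i, H i = 0 ∨ H i = 1) (P : ℕ → ℝ) (m : ℕ) (t : ℝ) :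
    FDP m H P t =
      proportion {z : ℝ × ℝ | z.1 = 0 ∧ z.2 ≤ t} {z | z.2 ≤ t} m (fun i => (H i, P i)) := by
  have hnum : ∀ i, ind (P i ≤ t) * (1 - H i) = ind (H i = 0 ∧ P i ≤ t) := fun i => by
    rcases hH i with h | h <;> simp [ind, h]
  simp only [FDP, proportion, hnum, Set.mem_ofPred_eq, not_le]

lemma FNP_eq_proportion {H : ℕ → ℝ} (hH : ∀ i, H i = 0 ∨ H i = 1) (P : ℕ → ℝ) (m : ℕ) (t : ℝ) :
    FNP m H P t =
      proportion {z : ℝ × ℝ | z.1 = 1 ∧ t < z.2} {z | t < z.2} m (fun i => (H i, P i)) := by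
  have hnum : ∀ i, ind (t < P i) * H i = ind (H i = 1 ∧ t < P i) := fun i => by
    rcases hH i with h | h <;> simp [ind, h]
  simp only [FNP, proportion, hnum, Set.mem_ofPred_eq, not_lt]

namespace RandomEffectsModel

variable {Ω : Type*} [MeasurableSpace Ω] {Pr : Measure Ω} {H P : ℕ → Ω → ℝ} {a : ℝ}
  {F : ℝ → ℝ} {t : ℝ}

lemma measureReal_null_le (hmod : RandomEffectsModel Pr H P a F) (ha : a ∈ Set.Icc (0 : ℝ) 1)
    (ht : t ∈ Set.Icc (0 : ℝ) 1) (i : ℕ) :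
    Pr.real {ω | H i ω = 0 ∧ P i ω ≤ t} = (1 - a) * t := by
  obtain ⟨-, -, -, -, -, -, -, hnull, -⟩ := hmod
  rw [measureReal_def, hnull i t ht, ENNReal.toReal_ofReal (mul_nonneg (sub_nonneg.2 ha.2) ht.1)]

lemma measureReal_alt_le (hmod : RandomEffectsModel Pr H P a F) (ha : a ∈ Set.Icc (0 : ℝ) 1)
    (ht : t ∈ Set.Icc (0 : ℝ) 1) (hFt : 0 ≤ F t) (i : ℕ) :
    Pr.real {ω | H i ω = 1 ∧ P i ω ≤ t} = a * F t := by
  obtain ⟨-, -, -, -, -, -, -, -, halt⟩ := hmod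
  rw [measureReal_def, halt i t ht, ENNReal.toReal_ofReal (mul_nonneg ha.1 hFt)]

lemma measureReal_le (hmod : RandomEffectsModel Pr H P a F) [IsFiniteMeasure Pr]
    (ha : a ∈ Set.Icc (0 : ℝ) 1) (ht : t ∈ Set.Icc (0 : ℝ) 1) (hFt : 0 ≤ F t) (i : ℕ) :
    Pr.real {ω | P i ω ≤ t} = (1 - a) * t + a * F t := by
  have hsplit : {ω | P i ω ≤ t} = {ω | H i ω = 0 ∧ P i ω ≤ t} ∪ {ω | H i ω = 1 ∧ P i ω ≤ t} := by
    ext ω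
    rcases hmod.2.2.1 i ω with h | h <;> simp [h]
  have hdisj : Disjoint {ω | H i ω = 0 ∧ P i ω ≤ t} {ω | H i ω = 1 ∧ P i ω ≤ t} :=
    Set.disjoint_left.2 fun ω h0 h1 => by simp [h0.1] at h1
  rw [hsplit, measureReal_union hdisj
      ((hmod.1 i (measurableSet_singleton 1)).inter (hmod.2.1 i measurableSet_Iic)),
    measureReal_null_le hmod ha ht, measureReal_alt_le hmod ha ht hFt]

lemma measureReal_gt (hmod : RandomEffectsModel Pr H P a F) [IsProbabilityMeasure Pr]
    (ha : a ∈ Set.Icc (0 : ℝ) 1) (ht : t ∈ Set.Icc (0 : ℝ) 1) (hFt : 0 ≤ F t) (i : ℕ) :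
    Pr.real {ω | t < P i ω} = 1 - ((1 - a) * t + a * F t) := by
  have hcompl : {ω | t < P i ω} = {ω | P i ω ≤ t}ᶜ := by
    ext ω; simp
  have hmeas : MeasurableSet {ω | P i ω ≤ t} := hmod.2.1 i measurableSet_Iic
  rw [hcompl, probReal_compl_eq_one_sub hmeas, measureReal_le hmod ha ht hFt]

lemma measureReal_alt_gt (hmod : RandomEffectsModel Pr H P a F) [IsFiniteMeasure Pr]
    (ha : a ∈ Set.Icc (0 : ℝ) 1) (ht : t ∈ Set.Icc (0 : ℝ) 1) (hFt : 0 ≤ F t) (i : ℕ) :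
    Pr.real {ω | H i ω = 1 ∧ t < P i ω} = a * (1 - F t) := by
  have hdiff : {ω | H i ω = 1 ∧ t < P i ω} = {ω | H i ω = 1} \ {ω | H i ω = 1 ∧ P i ω ≤ t} := by
    ext ω
    simp only [Set.mem_sdiff, Set.mem_ofPred_eq, not_and, not_le]
    tauto
  have hmeas : MeasurableSet {ω | H i ω = 1 ∧ P i ω ≤ t} :=
    (hmod.1 i (measurableSet_singleton 1)).inter (hmod.2.1 i measurableSet_Iic)
  rw [hdiff, measureReal_sdiff (s₁ := {ω | H i ω = 1}) (fun ω h => h.1) hmeas,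
    measureReal_alt_le hmod ha ht hFt, measureReal_def, hmod.2.2.2.2.2.2.1 i,
    ENNReal.toReal_ofReal ha.1]
  ring

end RandomEffectsModel

theorem expected_FDP_FNP_general
    {Ω : Type*} [MeasurableSpace Ω] (Pr : Measure Ω) [IsProbabilityMeasure Pr]
    (H P : ℕ → Ω → ℝ) (a : ℝ) (ha : a ∈ Set.Icc (0 : ℝ) 1)
    (F : ℝ → ℝ) (hF : IsPvalueCDF F)
    (hmod : RandomEffectsModel Pr H P a F)
    (m : ℕ) (t : ℝ) (ht : t ∈ Set.Ioc (0 : ℝ) 1)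
    (G : ℝ → ℝ) (hG : ∀ s, G s = (1 - a) * Ucdf s + a * F s) :
    (∫ ω, FDP m (fun i => H i ω) (fun i => P i ω) t ∂Pr) =
      ((1 - a) * t / G t) * (1 - (1 - G t) ^ m) ∧
    (∫ ω, FNP m (fun i => H i ω) (fun i => P i ω) t ∂Pr) =
      (a * (1 - F t) / (1 - G t)) * (1 - (G t) ^ m) := by
  have ht' : t ∈ Set.Icc (0 : ℝ) 1 := Set.Ioc_subset_Icc_self ht
  have hFt : 0 ≤ F t := ht'.1.trans (hF.2.2.2 t ht')
  have hGt : G t = (1 - a) * t + a * F t := by rw [hG, Ucdf_eq_self ht']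
  have hnull_le := hmod.measureReal_null_le ha ht'
  have hle := hmod.measureReal_le ha ht' hFt
  have halt_gt := hmod.measureReal_alt_gt ha ht' hFt
  have hgt := hmod.measureReal_gt ha ht' hFt
  obtain ⟨hHm, hPm, hH01, -, hind, -⟩ := hmod
  have hY : ∀ i, Measurable fun ω => (H i ω, P i ω) := fun i => (hHm i).prodMk (hPm i)
  constructor
  · simp_rw [FDP_eq_proportion (fun i => hH01 i _)]
    rw [integral_proportion (A := {z : ℝ × ℝ | z.1 = 0 ∧ z.2 ≤ t}) (B := {z | z.2 ≤ t}) hY hind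
      ((measurable_fst (measurableSet_singleton 0)).inter (measurable_snd measurableSet_Iic))
      (measurable_snd measurableSet_Iic) (fun z hz => hz.2) hnull_le hle, hGt]
  · simp_rw [FNP_eq_proportion (fun i => hH01 i _)]
    rw [integral_proportion (A := {z : ℝ × ℝ | z.1 = 1 ∧ t < z.2}) (B := {z | t < z.2}) hY hind
      ((measurable_fst (measurableSet_singleton 1)).inter (measurable_snd measurableSet_Ioi))
      (measurable_snd measurableSet_Ioi) (fun z hz => hz.2) halt_gt hgt, hGt, sub_sub_cancel]

/-- Lemma 2.1. Under the random effects mixture model, for every fixed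
`t > 0`, `E[Γ(t)] = Q(t)·(1 − (1 − G(t))^m)` and `E[Ξ(t)] = Q̃(t)·(1 − G(t)^m)`, where
`Q(t) = (1−a)t/G(t)`, `Q̃(t) = a(1 − F(t))/(1 − G(t))` and `G = (1−a)U + aF`. -/
theorem expected_FDP_FNP
    {Ω : Type*} [MeasurableSpace Ω] (Pr : Measure Ω) [IsProbabilityMeasure Pr]
    (H P : ℕ → Ω → ℝ) (a : ℝ) (ha : a ∈ Set.Icc (0 : ℝ) 1)
    (F : ℝ → ℝ) (hF : IsPvalueCDF F)
    (hmod : RandomEffectsModel Pr H P a F)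
    (m : ℕ) (hm : 0 < m) (t : ℝ) (ht : t ∈ Set.Ioc (0 : ℝ) 1)
    (G : ℝ → ℝ) (hG : ∀ s, G s = (1 - a) * Ucdf s + a * F s) :
    (∫ ω, FDP m (fun i => H i ω) (fun i => P i ω) t ∂Pr) =
      ((1 - a) * t / G t) * (1 - (1 - G t) ^ m) ∧
    (∫ ω, FNP m (fun i => H i ω) (fun i => P i ω) t ∂Pr) =
      (a * (1 - F t) / (1 - G t)) * (1 - (G t) ^ m) :=
  expected_FDP_FNP_general Pr H P a ha F hF hmod m t ht G hG
end
end

section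
/- If F is absolutely continuous and stochastically dominates the Uniform(0,1), then ζ_F = 1 − inf_t F′(t) and a̱ = 1 − inf_t G′(t). If moreover F is concave, these infima are achieved at t = 1. Furthermore, for any b ∈ [ζ_F, 1], G = (1 − ab)U + ab F_b, where F_b = (F − (1−b)U)/b is a CDF and F ≤ F_b pointwise. -/
open MeasureTheory ProbabilityTheory Filter
open scoped ENNReal NNReal Topology Classical

noncomputable section

/-! If `F` has a continuous density `f` on `[0,1]`, then `F - c U` is nondecreasing on `[0,1]`
exactly when `c ≤ f` there: one direction is the mean value theorem, the other reads the sign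
of the derivative at interior points and passes to the endpoints by continuity of `f`.
On the other hand `b ∈ O_F` exactly when `F - (1 - b) U` is nondecreasing on `[0,1]`, the witness
being `F_b`, so `O_F = [1 - min f, 1]`. Since `G' = (1 - a) + a f` is an increasing affine image
of `f`, the claim about `a̱` follows. A concave `F` has a nonincreasing derivative on `(0,1)`,
so by continuity `f` attains its minimum at `1`. -/

open Set

theorem Ucdf_of_mem_Icc {t : ℝ} (ht : t ∈ Icc (0 : ℝ) 1) : Ucdf t = t := by
  simp only [Ucdf, min_eq_left ht.2, max_eq_right ht.1]

theorem Ucdf_of_nonpos {t : ℝ} (ht : t ≤ 0) : Ucdf t = 0 :=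
  max_eq_left ((min_le_left t 1).trans ht)

theorem Ucdf_of_one_le {t : ℝ} (ht : 1 ≤ t) : Ucdf t = 1 := by
  simp only [Ucdf, min_eq_right ht, max_eq_right zero_le_one]

theorem Ucdf_mem_Icc (t : ℝ) : Ucdf t ∈ Icc (0 : ℝ) 1 :=
  ⟨le_max_left _ _, max_le zero_le_one (min_le_right t 1)⟩

theorem monotone_Ucdf : Monotone Ucdf := fun _ _ hst =>
  max_le_max le_rfl (min_le_min hst le_rfl)

theorem isPvalueCDF_Ucdf : IsPvalueCDF Ucdf :=
  ⟨monotone_Ucdf, fun _ => Ucdf_of_nonpos, fun _ => Ucdf_of_one_le,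
    fun _ ht => (Ucdf_of_mem_Icc ht).ge⟩

namespace IsPvalueCDF

variable {F : ℝ → ℝ}

theorem apply_Ucdf (hF : IsPvalueCDF F) (t : ℝ) : F (Ucdf t) = F t := by
  rcases le_or_gt t 0 with ht0 | ht0
  · rw [Ucdf_of_nonpos ht0, hF.2.1 0 le_rfl, hF.2.1 t ht0]
  rcases le_or_gt 1 t with ht1 | ht1
  · rw [Ucdf_of_one_le ht1, hF.2.2.1 1 le_rfl, hF.2.2.1 t ht1]
  · rw [Ucdf_of_mem_Icc ⟨ht0.le, ht1.le⟩]

theorem eq_Ucdf_of_monotoneOn_sub (hF : IsPvalueCDF F)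
    (hmono : MonotoneOn (fun t => F t - t) (Icc 0 1)) : F = Ucdf := by
  funext t
  have hu := Ucdf_mem_Icc t
  have hle : F (Ucdf t) - Ucdf t ≤ F 1 - 1 := hmono hu (right_mem_Icc.2 zero_le_one) hu.2
  rw [hF.2.2.1 1 le_rfl] at hle
  rw [← hF.apply_Ucdf t]
  linarith [hF.2.2.2 _ hu]

end IsPvalueCDF

/-- The component `F_b` in the decomposition `F = (1 - b) U + b F_b`. -/
def mixComponent (F : ℝ → ℝ) (b t : ℝ) : ℝ := (F t - (1 - b) * Ucdf t) / b

section mixComponent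

variable {F : ℝ → ℝ} {b : ℝ}

theorem isPvalueCDF_mixComponent (hF : IsPvalueCDF F) (hb : 0 < b)
    (hmono : MonotoneOn (fun t => F t - (1 - b) * t) (Icc 0 1)) :
    IsPvalueCDF (mixComponent F b) := by
  refine ⟨fun s t hst => ?_, fun t ht => ?_, fun t ht => ?_, fun t ht => ?_⟩
  · have h := hmono (Ucdf_mem_Icc s) (Ucdf_mem_Icc t) (monotone_Ucdf hst)
    simp only [hF.apply_Ucdf] at h
    exact div_le_div_of_nonneg_right h hb.le
  · simp [mixComponent, hF.2.1 t ht, Ucdf_of_nonpos ht]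
  · rw [mixComponent, hF.2.2.1 t ht, Ucdf_of_one_le ht]
    field_simp
    ring
  · rw [mixComponent, Ucdf_of_mem_Icc ht, le_div_iff₀ hb]
    linarith [hF.2.2.2 t ht]

theorem le_mixComponent (hF : IsPvalueCDF F) (hb0 : 0 < b) (hb1 : b ≤ 1) {t : ℝ}
    (ht : t ∈ Icc (0 : ℝ) 1) : F t ≤ mixComponent F b t := by
  rw [mixComponent, Ucdf_of_mem_Icc ht, le_div_iff₀ hb0]
  nlinarith [hF.2.2.2 t ht]

theorem mem_OSet_iff (hF : IsPvalueCDF F) :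
    b ∈ OSet F ↔ b ∈ Icc 0 1 ∧ MonotoneOn (fun t => F t - (1 - b) * t) (Icc 0 1) := by
  refine ⟨fun ⟨hb, H, hH, hFH⟩ => ⟨hb, fun s hs t ht hst => ?_⟩, fun ⟨hb, hmono⟩ => ⟨hb, ?_⟩⟩
  · simp only [hFH, Ucdf_of_mem_Icc hs, Ucdf_of_mem_Icc ht, add_sub_cancel_left]
    exact mul_le_mul_of_nonneg_left (hH.1 hst) hb.1
  -- `F_b` is junk at `b = 0` (division by zero); there the monotonicity forces `F = U` instead.
  rcases hb.1.eq_or_lt with rfl | hb0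
  · refine ⟨Ucdf, isPvalueCDF_Ucdf, fun t => ?_⟩
    rw [hF.eq_Ucdf_of_monotoneOn_sub (by simpa using hmono)]
    ring
  · refine ⟨mixComponent F b, isPvalueCDF_mixComponent hF hb0 hmono, fun t => ?_⟩
    rw [mixComponent]
    field_simp
    ring

end mixComponent

theorem ContinuousOn.forall_Icc_le_of_forall_Ioo_le {α β : Type*} [TopologicalSpace α]
    [LinearOrder α] [OrderTopology α] [DenselyOrdered α] [TopologicalSpace β] [Preorder β]
    [OrderClosedTopology β] {f : α → β} {a b : α} {c : β} (hf : ContinuousOn f (Icc a b))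
    (hab : a < b) (h : ∀ t ∈ Ioo a b, c ≤ f t) : ∀ t ∈ Icc a b, c ≤ f t := fun t ht =>
  ContinuousWithinAt.closure_le (by rwa [closure_Ioo hab.ne]) continuousWithinAt_const
    ((hf t ht).mono Ioo_subset_Icc_self) h

section Density

variable {F f : ℝ → ℝ}

theorem hasDerivAt_of_eq_integral (hfc : ContinuousOn f (Icc 0 1))
    (hac : ∀ t ∈ Icc (0 : ℝ) 1, F t = ∫ s in (0 : ℝ)..t, f s) {u : ℝ} (hu : u ∈ Ioo (0 : ℝ) 1) :
    HasDerivAt F (f u) u := by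
  have hnhds : Icc (0 : ℝ) 1 ∈ 𝓝 u := Icc_mem_nhds hu.1 hu.2
  have hint : HasDerivAt (fun t => ∫ s in (0 : ℝ)..t, f s) (f u) u :=
    intervalIntegral.integral_hasDerivAt_right
      ((hfc.mono (Icc_subset_Icc_right hu.2.le)).intervalIntegrable_of_Icc hu.1.le)
      ((hfc.mono Ioo_subset_Icc_self).stronglyMeasurableAtFilter isOpen_Ioo u hu)
      (hfc.continuousAt hnhds)
  exact hint.congr_of_eventuallyEq (Filter.eventually_of_mem hnhds hac)

theorem continuousOn_of_eq_integral (hfc : ContinuousOn f (Icc 0 1))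
    (hac : ∀ t ∈ Icc (0 : ℝ) 1, F t = ∫ s in (0 : ℝ)..t, f s) : ContinuousOn F (Icc 0 1) := by
  have h := intervalIntegral.continuousOn_primitive_interval (μ := volume)
    (a := 0) (b := 1) (f := f) (by rw [uIcc_of_le zero_le_one]; exact hfc.integrableOn_Icc)
  rw [uIcc_of_le zero_le_one] at h
  exact h.congr hac

theorem monotoneOn_sub_mul_iff (hfc : ContinuousOn f (Icc 0 1))
    (hac : ∀ t ∈ Icc (0 : ℝ) 1, F t = ∫ s in (0 : ℝ)..t, f s) (c : ℝ) :
    MonotoneOn (fun t => F t - c * t) (Icc 0 1) ↔ ∀ u ∈ Icc (0 : ℝ) 1, c ≤ f u := by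
  have hderiv (u : ℝ) (hu : u ∈ Ioo (0 : ℝ) 1) : HasDerivAt (fun t => F t - c * t) (f u - c) u :=
    ((hasDerivAt_of_eq_integral hfc hac hu).sub ((hasDerivAt_id u).const_mul c)).congr_deriv
      (by rw [mul_one])
  constructor
  · refine fun hmono => hfc.forall_Icc_le_of_forall_Ioo_le zero_lt_one fun u hu => ?_
    have h := hmono.derivWithin_nonneg (x := u)
    rw [derivWithin_of_mem_nhds (Icc_mem_nhds hu.1 hu.2), (hderiv u hu).deriv] at h
    linarith
  · intro hc
    refine monotoneOn_of_deriv_nonneg (convex_Icc 0 1)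
      ((continuousOn_of_eq_integral hfc hac).sub (continuousOn_const.mul continuousOn_id))
      (fun u hu => ?_) (fun u hu => ?_) <;> rw [interior_Icc] at hu
    · exact (hderiv u hu).differentiableAt.differentiableWithinAt
    · rw [(hderiv u hu).deriv]
      linarith [hc u (Ioo_subset_Icc_self hu)]

theorem le_sInf_image_iff (hfc : ContinuousOn f (Icc 0 1)) {c : ℝ} :
    c ≤ sInf (f '' Icc 0 1) ↔ ∀ u ∈ Icc (0 : ℝ) 1, c ≤ f u := by
  rw [le_csInf_iff (isCompact_Icc.image_of_continuousOn hfc).bddBelow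
    ((nonempty_Icc.2 zero_le_one).image f), forall_mem_image]

theorem density_one_le_of_concaveOn (hfc : ContinuousOn f (Icc 0 1))
    (hac : ∀ t ∈ Icc (0 : ℝ) 1, F t = ∫ s in (0 : ℝ)..t, f s)
    (hcon : ConcaveOn ℝ (Icc 0 1) F) : ∀ t ∈ Icc (0 : ℝ) 1, f 1 ≤ f t := by
  have hanti : AntitoneOn f (Ioo 0 1) := by
    have h := (hcon.subset Ioo_subset_Icc_self (convex_Ioo 0 1)).antitoneOn_deriv
      fun u hu => (hasDerivAt_of_eq_integral hfc hac hu).differentiableAt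
    exact h.congr fun u hu => (hasDerivAt_of_eq_integral hfc hac hu).deriv
  refine hfc.forall_Icc_le_of_forall_Ioo_le zero_lt_one fun t ht => ?_
  exact ContinuousWithinAt.closure_le (by rw [closure_Ioo ht.2.ne]; exact right_mem_Icc.2 ht.2.le)
    ((hfc 1 (right_mem_Icc.2 zero_le_one)).mono (Ioo_subset_Icc_self.trans
      (Icc_subset_Icc_left ht.1.le))) continuousWithinAt_const
    fun s hs => hanti ht ⟨ht.1.trans hs.1, hs.2⟩ hs.1.le

end Density

theorem OSet_eq_Icc {F f : ℝ → ℝ} (hF : IsPvalueCDF F) (hfc : ContinuousOn f (Icc 0 1))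
    (hac : ∀ t ∈ Icc (0 : ℝ) 1, F t = ∫ s in (0 : ℝ)..t, f s) :
    OSet F = Icc (1 - sInf (f '' Icc 0 1)) 1 := by
  have hm1 : sInf (f '' Icc 0 1) ≤ 1 := by
    have h := (monotoneOn_sub_mul_iff hfc hac _).2 ((le_sInf_image_iff hfc).1 le_rfl)
      (left_mem_Icc.2 zero_le_one) (right_mem_Icc.2 zero_le_one) zero_le_one
    simp only [hF.2.1 0 le_rfl, hF.2.2.1 1 le_rfl, mul_zero, mul_one] at h
    linarith
  ext b
  rw [mem_OSet_iff hF, monotoneOn_sub_mul_iff hfc hac, ← le_sInf_image_iff hfc, mem_Icc, mem_Icc]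
  constructor <;> rintro ⟨h1, h2⟩
  · exact ⟨by linarith, h1.2⟩
  · exact ⟨⟨by linarith, h2⟩, by linarith⟩

theorem zeta_eq_one_sub_sInf {F f : ℝ → ℝ} (hF : IsPvalueCDF F) (hfc : ContinuousOn f (Icc 0 1))
    (hac : ∀ t ∈ Icc (0 : ℝ) 1, F t = ∫ s in (0 : ℝ)..t, f s) :
    zeta F = 1 - sInf (f '' Icc 0 1) := by
  have hm0 : 0 ≤ sInf (f '' Icc 0 1) :=
    (le_sInf_image_iff hfc).2 <| (monotoneOn_sub_mul_iff hfc hac 0).1 <| by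
      simpa using hF.1.monotoneOn (Icc 0 1)
  rw [zeta, OSet_eq_Icc hF hfc hac]
  exact csInf_Icc (by linarith)

theorem csInf_image_const_add_mul {s : Set ℝ} (hs : s.Nonempty) (hbdd : BddBelow s) (c : ℝ)
    {a : ℝ} (ha : 0 ≤ a) : sInf ((fun x => c + a * x) '' s) = c + a * sInf s :=
  (Monotone.map_csInf_of_continuousAt (by fun_prop)
    (fun _ _ hxy => add_le_add_right (mul_le_mul_of_nonneg_left hxy ha) c) hs hbdd).symm

theorem purity_identifiability_general
    (a : ℝ) (ha : a ∈ Set.Icc (0 : ℝ) 1)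
    (F f : ℝ → ℝ) (hF : IsPvalueCDF F)
    (hfc : ContinuousOn f (Set.Icc (0 : ℝ) 1))
    (hac : ∀ t ∈ Set.Icc (0 : ℝ) 1, F t = ∫ s in (0 : ℝ)..t, f s) :
    (zeta F = 1 - sInf (f '' Set.Icc (0 : ℝ) 1)) ∧
    (a * zeta F = 1 - sInf ((fun t => (1 - a) + a * f t) '' Set.Icc (0 : ℝ) 1)) ∧
    (ConcaveOn ℝ (Set.Icc (0 : ℝ) 1) F →
      sInf (f '' Set.Icc (0 : ℝ) 1) = f 1 ∧
      sInf ((fun t => (1 - a) + a * f t) '' Set.Icc (0 : ℝ) 1) = (1 - a) + a * f 1) ∧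
    (∀ b, b ∈ Set.Icc (zeta F) 1 → 0 < b →
      IsPvalueCDF (fun t => (F t - (1 - b) * Ucdf t) / b) ∧
      (∀ t ∈ Set.Icc (0 : ℝ) 1, F t ≤ (F t - (1 - b) * Ucdf t) / b) ∧
      (∀ t, (1 - a) * Ucdf t + a * F t =
        (1 - a * b) * Ucdf t + (a * b) * ((F t - (1 - b) * Ucdf t) / b))) := by
  have hzeta := zeta_eq_one_sub_sInf hF hfc hac
  have hG : sInf ((fun t => (1 - a) + a * f t) '' Icc 0 1)
      = (1 - a) + a * sInf (f '' Icc 0 1) := by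
    rw [← image_image (fun x => (1 - a) + a * x)]
    exact csInf_image_const_add_mul ((nonempty_Icc.2 zero_le_one).image f)
      (isCompact_Icc.image_of_continuousOn hfc).bddBelow _ ha.1
  refine ⟨hzeta, by rw [hzeta, hG]; ring, fun hcon => ?_, fun b hb hb0 => ?_⟩
  · have hmin : sInf (f '' Icc 0 1) = f 1 :=
      IsLeast.csInf_eq ⟨mem_image_of_mem f (right_mem_Icc.2 zero_le_one),
        forall_mem_image.2 (density_one_le_of_concaveOn hfc hac hcon)⟩
    exact ⟨hmin, hmin ▸ hG⟩
  · rw [hzeta] at hb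
    have hmono : MonotoneOn (fun t => F t - (1 - b) * t) (Icc 0 1) :=
      (monotoneOn_sub_mul_iff hfc hac _).2 ((le_sInf_image_iff hfc).1 (by linarith [hb.1]))
    refine ⟨isPvalueCDF_mixComponent hF hb0 hmono, fun t ht => le_mixComponent hF hb0 hb.2 ht,
      fun t => ?_⟩
    field_simp
    ring

/-- Proposition 3.1. If `F` is absolutely continuous (with density `f`)
and stochastically dominates `Uniform(0,1)`, then `ζ_F = 1 − inf_t F′(t)` and
`a̲ = a·ζ_F = 1 − inf_t G′(t)` where `G′ = (1−a) + a f`. If moreover `F` is concave, the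
infima are achieved at `t = 1`. Furthermore, for any `b ∈ [ζ_F, 1]`,
`G = (1 − ab)U + ab F_b`, where `F_b = (F − (1−b)U)/b` is a CDF and `F ≤ F_b`. -/
theorem purity_identifiability
    (a : ℝ) (ha : a ∈ Set.Icc (0 : ℝ) 1)
    (F f : ℝ → ℝ) (hF : IsPvalueCDF F)
    (hf0 : ∀ t ∈ Set.Icc (0 : ℝ) 1, 0 ≤ f t)
    (hfc : ContinuousOn f (Set.Icc (0 : ℝ) 1))
    (hac : ∀ t ∈ Set.Icc (0 : ℝ) 1, F t = ∫ s in (0 : ℝ)..t, f s) :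
    (zeta F = 1 - sInf (f '' Set.Icc (0 : ℝ) 1)) ∧
    (a * zeta F = 1 - sInf ((fun t => (1 - a) + a * f t) '' Set.Icc (0 : ℝ) 1)) ∧
    (ConcaveOn ℝ (Set.Icc (0 : ℝ) 1) F →
      sInf (f '' Set.Icc (0 : ℝ) 1) = f 1 ∧
      sInf ((fun t => (1 - a) + a * f t) '' Set.Icc (0 : ℝ) 1) = (1 - a) + a * f 1) ∧
    (∀ b, b ∈ Set.Icc (zeta F) 1 → 0 < b →
      IsPvalueCDF (fun t => (F t - (1 - b) * Ucdf t) / b) ∧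
      (∀ t ∈ Set.Icc (0 : ℝ) 1, F t ≤ (F t - (1 - b) * Ucdf t) / b) ∧
      (∀ t, (1 - a) * Ucdf t + a * F t =
        (1 - a * b) * Ucdf t + (a * b) * ((F t - (1 - b) * Ucdf t) / b))) :=
  purity_identifiability_general a ha F f hF hfc hac
end
end

section
/- For any t_0 ∈ (0,1), the quantity a_0 = (G(t_0) − t_0)/(1 − t_0) satisfies 0 ≤ a_0 ≤ a̱ ≤ a ≤ 1; that is, a_0 is an identifiable lower bound on the mixing proportion a. -/
open MeasureTheory ProbabilityTheory Filter
open scoped ENNReal NNReal Topology Classical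

noncomputable section

/-!
Every decomposition `F = (1 - b)U + bH` with `H` a p-value CDF bounds the excess of `F` over the
uniform CDF: `F t - t = b (H t - t) ≤ b (1 - t)`. Hence `(F t₀ - t₀)/(1 - t₀)` is a lower bound of
`O_F`, so it is at most `ζ_F`; multiplying by `a` and using `G t₀ - t₀ = a (F t₀ - t₀)` gives the
middle inequality, while `1 ∈ O_F` (take `H = F`) gives `ζ_F ≤ 1`.
-/

open Set

theorem Gmix_sub_self (a : ℝ) (F : ℝ → ℝ) {t : ℝ} (ht : t ∈ Icc (0 : ℝ) 1) :
    Gmix a F t - t = a * (F t - t) := by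
  rw [Gmix, Ucdf_of_mem_Icc ht]
  ring

namespace IsPvalueCDF

variable {H : ℝ → ℝ}

theorem le_one (hH : IsPvalueCDF H) (t : ℝ) : H t ≤ 1 := by
  calc H t ≤ H (max t 1) := hH.1 (le_max_left t 1)
    _ = 1 := hH.2.2.1 _ (le_max_right t 1)

theorem self_le (hH : IsPvalueCDF H) {t : ℝ} (ht : t ∈ Icc (0 : ℝ) 1) : t ≤ H t :=
  hH.2.2.2 t ht

end IsPvalueCDF

theorem one_mem_OSet {F : ℝ → ℝ} (hF : IsPvalueCDF F) : (1 : ℝ) ∈ OSet F :=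
  ⟨⟨zero_le_one, le_rfl⟩, F, hF, fun t => by ring⟩

theorem sub_self_le_mul_of_mem_OSet {F : ℝ → ℝ} {b t : ℝ} (hb : b ∈ OSet F)
    (ht : t ∈ Icc (0 : ℝ) 1) : F t - t ≤ b * (1 - t) := by
  obtain ⟨⟨hb0, -⟩, H, hH, hFH⟩ := hb
  have hexcess : F t - t = b * (H t - t) := by
    rw [hFH, Ucdf_of_mem_Icc ht]
    ring
  rw [hexcess]
  exact mul_le_mul_of_nonneg_left (by linarith [hH.le_one t]) hb0

theorem zeta_nonneg (F : ℝ → ℝ) : 0 ≤ zeta F :=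
  Real.sInf_nonneg fun _ hb => hb.1.1

theorem zeta_le_one {F : ℝ → ℝ} (hF : IsPvalueCDF F) : zeta F ≤ 1 :=
  csInf_le ⟨0, fun _ hb => hb.1.1⟩ (one_mem_OSet hF)

theorem sub_self_div_le_zeta {F : ℝ → ℝ} (hF : IsPvalueCDF F) {t : ℝ}
    (ht : t ∈ Ico (0 : ℝ) 1) : (F t - t) / (1 - t) ≤ zeta F :=
  le_csInf ⟨1, one_mem_OSet hF⟩ fun _ hb =>
    (div_le_iff₀ (sub_pos.2 ht.2)).2 (sub_self_le_mul_of_mem_OSet hb (Ico_subset_Icc_self ht))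

/-- For any `t₀ ∈ (0,1)`, the quantity `a₀ = (G(t₀) − t₀)/(1 − t₀)`
satisfies `0 ≤ a₀ ≤ a̲ ≤ a ≤ 1` where `a̲ = a·ζ_F`: it is an identifiable lower
bound on the mixing proportion `a`. -/
theorem identifiable_lower_bound
    (a : ℝ) (ha : a ∈ Set.Icc (0 : ℝ) 1)
    (F : ℝ → ℝ) (hF : IsPvalueCDF F)
    (t₀ : ℝ) (ht₀ : t₀ ∈ Set.Ioo (0 : ℝ) 1) :
    0 ≤ (Gmix a F t₀ - t₀) / (1 - t₀) ∧
    (Gmix a F t₀ - t₀) / (1 - t₀) ≤ a * zeta F ∧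
    a * zeta F ≤ a ∧ a ≤ 1 := by
  have ht : t₀ ∈ Icc (0 : ℝ) 1 := Ioo_subset_Icc_self ht₀
  have hden : 0 < 1 - t₀ := sub_pos.2 ht₀.2
  rw [Gmix_sub_self a F ht, mul_div_assoc]
  refine ⟨?_, ?_, mul_le_of_le_one_right ha.1 (zeta_le_one hF), ha.2⟩
  · exact mul_nonneg ha.1 (div_nonneg (sub_nonneg.2 (hF.self_le ht)) hden.le)
  · exact mul_le_mul_of_nonneg_left (sub_self_div_le_zeta hF (Ioo_subset_Ico_self ht₀)) ha.1
end
end
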